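/- Let n ≥ 2, α ∈ (0,1), σ : ℝ → ℝ differentiable at 0 with σ(0) = 0 and σ'(0) > 0, and training inputs x₁,…,x_n ∈ ℝ^{p₁} not all columns zero. Let Y ∈ ℝⁿ have i.i.d. coordinates Yᵢ ~ N(b, ξ²) for some b ∈ ℝ, ξ > 0, define Λ(Y) = σ'(0) · max_k |∑ᵢ x_{i,k}(Yᵢ − Ȳ)| / ‖Y − Ȳ·1‖₂ (set to 0 if Y = Ȳ·1), and let λ_QUT be the (1−α)-quantile of Λ(Y); assume P(Λ(Y) = λ_QUT) = 0. Then with probability at least 1 − α, for every nonzero w₂ ∈ ℝ^{p₂}, the zero matrix is a local minimum of the map W₁ ↦ ‖Y − (μ_{W₁,w₂}(xᵢ))ᵢ‖₂ + λ_QUT·‖W₁‖₁, where μ_{W₁,w₂}(x) = Ȳ + ⟨w₂, σ(W₁x)⟩/‖w₂‖₂; consequently, with probability at least 1 − α the penalized problem admits a local minimum whose fitted function is constant. -/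

import Mathlib

open MeasureTheory ProbabilityTheory

/-- Sample mean `ȳ = (1/n)∑ᵢ yᵢ`. -/
noncomputable def sampleMean (n : ℕ) (y : Fin n → ℝ) : ℝ := (∑ i, y i) / n

/-- Two-layer network prediction
`μ_{W₁,w₂}(x) = ȳ + ⟨w₂, σ(W₁ x)⟩ / ‖w₂‖₂` (first-layer biases zero,
last-layer bias equal to the sample mean `ȳ`). -/
noncomputable def netPred (n p₁ p₂ : ℕ) (σ : ℝ → ℝ) (y : Fin n → ℝ)
    (w₂ : Fin p₂ → ℝ) (W₁ : Fin p₂ → Fin p₁ → ℝ) (x' : Fin p₁ → ℝ) : ℝ :=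
  sampleMean n y +
    (∑ j, w₂ j * σ (∑ k, W₁ j k * x' k)) / Real.sqrt (∑ j, (w₂ j) ^ 2)

/-- Penalized objective `W₁ ↦ ‖y − (μ_{W₁,w₂}(xᵢ))ᵢ‖₂ + λ·‖W₁‖₁`. -/
noncomputable def penObj (n p₁ p₂ : ℕ) (σ : ℝ → ℝ) (x : Fin n → Fin p₁ → ℝ)
    (y : Fin n → ℝ) (w₂ : Fin p₂ → ℝ) (lam : ℝ)
    (W₁ : Fin p₂ → Fin p₁ → ℝ) : ℝ :=
  Real.sqrt (∑ i, (y i - netPred n p₁ p₂ σ y w₂ W₁ (x i)) ^ 2) +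
    lam * ∑ j, ∑ k, |W₁ j k|

/-- The pivotal statistic `Λ(y) = σ'(0) · max_k |∑ᵢ x_{i,k}(yᵢ − ȳ)| / ‖y − ȳ·1‖₂`
(for `p₁ > 0` the `⨆` over `Fin p₁` is the maximum over `k`; when `y = ȳ·1` the
formula yields `0` by the division-by-zero convention, matching the piecewise
definition). -/
noncomputable def lamStat (n p₁ : ℕ) (s : ℝ) (x : Fin n → Fin p₁ → ℝ)
    (y : Fin n → ℝ) : ℝ :=
  s * (⨆ k : Fin p₁, |∑ i, x i k * (y i - sampleMean n y)|) /
    Real.sqrt (∑ i, (y i - sampleMean n y) ^ 2)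

/-!
If `y` is not constant, the square-root loss `W₁ ↦ ‖y - μ_{W₁,w₂}‖₂` is differentiable at
`W₁ = 0`, with gradient `-(σ'(0) / ‖y - ȳ·1‖₂) (w₂ / ‖w₂‖₂) cᵀ` where `c_k = ∑ᵢ x_{i,k}(yᵢ - ȳ)`;
its entries are bounded by `Λ(y)`. So for `λ > Λ(y)` the ℓ1 penalty beats the first-order
decrease of the loss and `0` is a local minimum (for constant `y` the objective vanishes at `0`).
The event of the theorem thus contains `{Λ(Y) < λ_QUT}`, which has the probability of
`{Λ(Y) ≤ λ_QUT}` since `Λ(Y)` has no atom at `λ_QUT`, and that is at least `1 - α` by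
right-continuity of the distribution function of `Λ(Y)`.
-/

open Filter Topology

theorem StieltjesFunction.le_apply_sInf_setOf_le (F : StieltjesFunction ℝ) {c : ℝ}
    (h : {t | c ≤ F t}.Nonempty) : c ≤ F (sInf {t | c ≤ F t}) := by
  set q := sInf {t | c ≤ F t}
  have hright : Tendsto F (𝓝[>] q) (𝓝 (F q)) :=
    (F.right_continuous q).mono_left (nhdsWithin_mono _ Set.Ioi_subset_Ici_self)
  refine ge_of_tendsto hright (eventually_nhdsWithin_of_forall fun t (ht : q < t) => ?_)
  obtain ⟨u, hu, hut⟩ := exists_lt_of_csInf_lt h ht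
  exact hu.trans (F.mono hut.le)

theorem ofReal_le_measure_lt_of_eq_sInf {Ω : Type*} [MeasurableSpace Ω] {P : Measure Ω}
    [IsProbabilityMeasure P] {f : Ω → ℝ} (hf : Measurable f) {c q : ℝ} (hc : c < 1)
    (hq : q = sInf {t | c ≤ (P {ω | f ω ≤ t}).toReal}) (hatom : P {ω | f ω = q} = 0) :
    ENNReal.ofReal c ≤ P {ω | f ω < q} := by
  have := Measure.isProbabilityMeasure_map (μ := P) hf.aemeasurable
  have hcdf : ∀ t, cdf (P.map f) t = (P {ω | f ω ≤ t}).toReal := fun t => by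
    rw [cdf_eq_real, measureReal_def, Measure.map_apply hf measurableSet_Iic]; rfl
  simp only [← hcdf] at hq
  have hne : {t | c ≤ cdf (P.map f) t}.Nonempty :=
    ((tendsto_cdf_atTop _).eventually (eventually_ge_nhds hc)).exists
  have hle := (cdf (P.map f)).le_apply_sInf_setOf_le hne
  rw [← hq, hcdf, ← ENNReal.ofReal_le_iff_le_toReal (measure_ne_top _ _)] at hle
  have hsplit : {ω | f ω < q} = {ω | f ω ≤ q} \ {ω | f ω = q} := by
    ext ω; simp [lt_iff_le_and_ne]
  rwa [hsplit, measure_sdiff_null hatom]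

theorem isLocalMin_add_mul_of_hasFDerivAt {E : Type*} [NormedAddCommGroup E]
    [NormedSpace ℝ E] {f pen : E → ℝ} {L : E →L[ℝ] ℝ} {a lam : ℝ} (hf : HasFDerivAt f L 0)
    (hpen : ∀ W, ‖W‖ ≤ pen W) (hpen0 : pen 0 = 0) (hL : ∀ W, |L W| ≤ a * pen W)
    (ha : a < lam) : IsLocalMin (fun W => f W + lam * pen W) 0 := by
  have hlo := (hasFDerivAt_iff_isLittleO_nhds_zero.1 hf).def (sub_pos.2 ha)
  filter_upwards [hlo] with W hW
  simp only [zero_add, Real.norm_eq_abs, abs_le] at hW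
  have hLW := (abs_le.1 (hL W)).1
  have hpenW : (lam - a) * ‖W‖ ≤ (lam - a) * pen W := by gcongr; linarith [hpen W]
  simp only [hpen0, mul_zero, add_zero]
  linarith [hW.1]

theorem hasFDerivAt_sqrt_sum_sq_sub {E ι : Type*} [NormedAddCommGroup E] [NormedSpace ℝ E]
    [Fintype ι] (y : ι → ℝ) {f : ι → E → ℝ} {f' : ι → E →L[ℝ] ℝ} {W₀ : E}
    (hf : ∀ i, HasFDerivAt (f i) (f' i) W₀) (hne : ∑ i, (y i - f i W₀) ^ 2 ≠ 0) :
    HasFDerivAt (fun W => √(∑ i, (y i - f i W) ^ 2))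
      (-(√(∑ i, (y i - f i W₀) ^ 2))⁻¹ • ∑ i, (y i - f i W₀) • f' i) W₀ := by
  refine (HasFDerivAt.sqrt (HasFDerivAt.fun_sum fun i _ =>
    ((hf i).const_sub (y i)).pow 2) hne).congr_fderiv ?_
  ext W
  simp only [smul_apply, sum_apply, neg_apply, smul_eq_mul, nsmul_eq_mul, Finset.mul_sum]
  refine Finset.sum_congr rfl fun i _ => ?_
  field_simp
  ring

theorem abs_sum_sum_mul_le {ι κ : Type*} [Fintype ι] [Fintype κ] {G : ι → κ → ℝ} {B : ℝ}
    (hG : ∀ j k, |G j k| ≤ B) (W : ι → κ → ℝ) :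
    |∑ j, ∑ k, G j k * W j k| ≤ B * ∑ j, ∑ k, |W j k| := by
  simp only [Finset.mul_sum]
  refine (Finset.abs_sum_le_sum_abs _ _).trans (Finset.sum_le_sum fun j _ => ?_)
  refine (Finset.abs_sum_le_sum_abs _ _).trans (Finset.sum_le_sum fun k _ => ?_)
  rw [abs_mul]
  exact mul_le_mul_of_nonneg_right (hG j k) (abs_nonneg _)

theorem norm_le_sum_sum_abs {ι κ : Type*} [Fintype ι] [Fintype κ] (W : ι → κ → ℝ) :
    ‖W‖ ≤ ∑ j, ∑ k, |W j k| := by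
  refine (pi_norm_le_iff_of_nonneg (by positivity)).2 fun j => ?_
  refine (pi_norm_le_iff_of_nonneg (by positivity)).2 fun k => ?_
  rw [Real.norm_eq_abs]
  exact (Finset.single_le_sum (fun k _ => abs_nonneg (W j k)) (Finset.mem_univ k)).trans
    (Finset.single_le_sum (f := fun j => ∑ k, |W j k|) (fun j _ => by positivity)
      (Finset.mem_univ j))

noncomputable def pairingCLM {p₁ p₂ : ℕ} (w : Fin p₂ → ℝ) (x' : Fin p₁ → ℝ) :
    (Fin p₂ → Fin p₁ → ℝ) →L[ℝ] ℝ :=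
  LinearMap.toContinuousLinearMap
    { toFun := fun W => ∑ j, w j * ∑ k, W j k * x' k
      map_add' := fun W W' => by
        simp only [Pi.add_apply, add_mul, Finset.sum_add_distrib, mul_add]
      map_smul' := fun c W => by
        simp only [Pi.smul_apply, smul_eq_mul, Finset.mul_sum, RingHom.id_apply,
          mul_left_comm c, mul_assoc] }

@[simp] theorem pairingCLM_apply {p₁ p₂ : ℕ} (w : Fin p₂ → ℝ) (x' : Fin p₁ → ℝ)
    (W : Fin p₂ → Fin p₁ → ℝ) : pairingCLM w x' W = ∑ j, w j * ∑ k, W j k * x' k := rfl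

theorem hasFDerivAt_sum_mul_activation {p₁ p₂ : ℕ} {σ : ℝ → ℝ} {s : ℝ}
    (hσ : HasDerivAt σ s 0) (w : Fin p₂ → ℝ) (x' : Fin p₁ → ℝ) :
    HasFDerivAt (fun W : Fin p₂ → Fin p₁ → ℝ => ∑ j, w j * σ (∑ k, W j k * x' k))
      (s • pairingCLM w x') 0 := by
  have hrow : ∀ j, HasFDerivAt (fun W : Fin p₂ → Fin p₁ → ℝ => ∑ k, W j k * x' k)
      (pairingCLM (Pi.single j 1) x') 0 := fun j =>
    (pairingCLM (Pi.single j 1) x').hasFDerivAt.congr_of_eventuallyEq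
      (Eventually.of_forall fun W => by simp [Pi.single_apply])
  refine (HasFDerivAt.fun_sum fun j _ =>
    ((hσ.comp_hasFDerivAt_of_eq 0 (hrow j) (by simp)).const_mul (w j))).congr_fderiv ?_
  ext W
  simp [Pi.single_apply, Finset.mul_sum, mul_left_comm]

theorem netPred_zero {n p₁ p₂ : ℕ} {σ : ℝ → ℝ} (hσ0 : σ 0 = 0) (y : Fin n → ℝ)
    (w₂ : Fin p₂ → ℝ) (x' : Fin p₁ → ℝ) : netPred n p₁ p₂ σ y w₂ 0 x' = sampleMean n y := by
  simp [netPred, hσ0]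

theorem hasFDerivAt_netPred {n p₁ p₂ : ℕ} {σ : ℝ → ℝ} {s : ℝ} (hσ : HasDerivAt σ s 0)
    (y : Fin n → ℝ) (w₂ : Fin p₂ → ℝ) (x' : Fin p₁ → ℝ) :
    HasFDerivAt (fun W => netPred n p₁ p₂ σ y w₂ W x')
      ((s / √(∑ j, w₂ j ^ 2)) • pairingCLM w₂ x') 0 := by
  have h := ((hasFDerivAt_sum_mul_activation hσ w₂ x').mul_const
    (√(∑ j, w₂ j ^ 2))⁻¹).const_add (sampleMean n y)
  simp only [← div_eq_mul_inv] at h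
  refine h.congr_fderiv ?_
  ext W
  simp only [smul_apply, pairingCLM_apply, smul_eq_mul]
  ring

theorem abs_sum_mul_pairingCLM_le {n p₁ p₂ : ℕ} (v : Fin n → ℝ) (x : Fin n → Fin p₁ → ℝ)
    (w : Fin p₂ → ℝ) (W : Fin p₂ → Fin p₁ → ℝ) :
    |∑ i, v i * pairingCLM w (x i) W| ≤
      √(∑ j, w j ^ 2) * (⨆ k, |∑ i, x i k * v i|) * ∑ j, ∑ k, |W j k| := by
  have hswap : ∑ i, v i * pairingCLM w (x i) W =
      ∑ j, ∑ k, (w j * ∑ i, x i k * v i) * W j k := by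
    simp only [pairingCLM_apply, Finset.mul_sum, Finset.sum_mul]
    rw [Finset.sum_comm]
    refine Finset.sum_congr rfl fun j _ => ?_
    rw [Finset.sum_comm]
    exact Finset.sum_congr rfl fun k _ => Finset.sum_congr rfl fun i _ => by ring
  rw [hswap]
  refine abs_sum_sum_mul_le (fun j k => ?_) W
  rw [abs_mul]
  exact mul_le_mul
    (Real.abs_le_sqrt (Finset.single_le_sum (fun j _ => sq_nonneg (w j)) (Finset.mem_univ j)))
    (le_ciSup (f := fun k => |∑ i, x i k * v i|) (Set.finite_range _).bddAbove k)
    (abs_nonneg _) (Real.sqrt_nonneg _)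

theorem isLocalMin_penObj_zero {n p₁ p₂ : ℕ} {σ : ℝ → ℝ} {s : ℝ} (hσ : HasDerivAt σ s 0)
    (hσ0 : σ 0 = 0) (hs : 0 ≤ s) (x : Fin n → Fin p₁ → ℝ) (y : Fin n → ℝ)
    (w₂ : Fin p₂ → ℝ) {lam : ℝ} (hlam : lamStat n p₁ s x y < lam) :
    IsLocalMin (penObj n p₁ p₂ σ x y w₂ lam) 0 := by
  set v : Fin n → ℝ := fun i => y i - sampleMean n y
  have hres0 : ∀ i, y i - netPred n p₁ p₂ σ y w₂ 0 (x i) = v i := fun i => by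
    rw [netPred_zero hσ0]
  by_cases hv : ∑ i, v i ^ 2 = 0
  · -- here `lamStat n p₁ s x y = 0` because of the convention `a / 0 = 0`
    have hlam0 : 0 < lam := by simpa [lamStat, v, hv] using hlam
    refine Eventually.of_forall fun W => ?_
    have hobj0 : penObj n p₁ p₂ σ x y w₂ lam 0 = 0 := by simp [penObj, hres0, hv]
    rw [hobj0]
    unfold penObj
    positivity
  have hf := hasFDerivAt_sqrt_sum_sq_sub y
    (fun i => hasFDerivAt_netPred hσ y w₂ (x i)) (by simpa only [hres0] using hv)
  refine isLocalMin_add_mul_of_hasFDerivAt hf norm_le_sum_sum_abs (by simp) (fun W => ?_) hlam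
  set V := √(∑ i, v i ^ 2)
  set ω := √(∑ j, w₂ j ^ 2)
  set M := ⨆ k, |∑ i, x i k * v i|
  have hM : 0 ≤ M := Real.iSup_nonneg fun k => abs_nonneg _
  have hsω : s / ω * ω ≤ s := by
    rcases eq_or_ne ω 0 with h | h
    · simp [h, hs]
    · rw [div_mul_cancel₀ _ h]
  have hpull : ∑ i, v i * (s / ω * pairingCLM w₂ (x i) W) =
      s / ω * ∑ i, v i * pairingCLM w₂ (x i) W := by
    rw [Finset.mul_sum]
    exact Finset.sum_congr rfl fun i _ => by ring
  simp only [hres0, smul_apply, sum_apply, smul_eq_mul]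
  rw [hpull, abs_mul, abs_neg, abs_inv, abs_mul, abs_of_nonneg (Real.sqrt_nonneg _),
    abs_of_nonneg (div_nonneg hs (Real.sqrt_nonneg _))]
  calc V⁻¹ * (s / ω * |∑ i, v i * pairingCLM w₂ (x i) W|)
      ≤ V⁻¹ * (s / ω * (ω * M * ∑ j, ∑ k, |W j k|)) := by
        gcongr; exact abs_sum_mul_pairingCLM_le v x w₂ W
    _ = V⁻¹ * (s / ω * ω) * M * ∑ j, ∑ k, |W j k| := by ring
    _ ≤ V⁻¹ * s * M * ∑ j, ∑ k, |W j k| := by gcongr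
    _ = lamStat n p₁ s x y * ∑ j, ∑ k, |W j k| := by rw [lamStat]; ring

theorem qut_recovers_constant_two_layer_general
    (n p₁ p₂ : ℕ)
    (α : ℝ) (hα : α ∈ Set.Ioo (0 : ℝ) 1)
    (σ : ℝ → ℝ) (s : ℝ) (hσ : HasDerivAt σ s 0) (hσ0 : σ 0 = 0) (hs : 0 < s)
    (x : Fin n → Fin p₁ → ℝ)
    (b ξ : ℝ)
    (P : Measure (Fin n → ℝ))
    (hP : P = Measure.pi fun _ : Fin n => gaussianReal b ⟨ξ ^ 2, sq_nonneg ξ⟩)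
    (lamQUT : ℝ)
    (hq : lamQUT = sInf {t : ℝ | 1 - α ≤ (P {y | lamStat n p₁ s x y ≤ t}).toReal})
    (hcont : P {y | lamStat n p₁ s x y = lamQUT} = 0) :
    1 - α ≤ (P {y | ∀ w₂ : Fin p₂ → ℝ, w₂ ≠ 0 →
        IsLocalMin (penObj n p₁ p₂ σ x y w₂ lamQUT) 0 ∧
        ∃ W₁ : Fin p₂ → Fin p₁ → ℝ,
          IsLocalMin (penObj n p₁ p₂ σ x y w₂ lamQUT) W₁ ∧
          ∀ x' : Fin p₁ → ℝ,
            netPred n p₁ p₂ σ y w₂ W₁ x' = sampleMean n y}).toReal := by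
  have : IsProbabilityMeasure P := hP ▸
    @Measure.pi.instIsProbabilityMeasure _ _ _ _ _ fun _ => instIsProbabilityMeasureGaussianReal _ _
  have hmeas : Measurable (lamStat n p₁ s x) := by
    unfold lamStat sampleMean
    fun_prop
  have hlt := ofReal_le_measure_lt_of_eq_sInf hmeas (by linarith [hα.1]) hq hcont
  rw [← ENNReal.ofReal_le_iff_le_toReal (measure_ne_top _ _)]
  refine hlt.trans (measure_mono fun y (hy : lamStat n p₁ s x y < lamQUT) w₂ _ => ?_)
  have hmin := isLocalMin_penObj_zero hσ hσ0 hs.le x y w₂ hy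
  exact ⟨hmin, 0, hmin, netPred_zero hσ0 y w₂⟩

/-- Theorem 2 instantiated for the two-layer network: with
`Y ~ N(b, ξ²)^⊗n`, `λ_QUT` the `(1−α)`-quantile of `Λ(Y)` and
`P(Λ(Y) = λ_QUT) = 0`, with probability at least `1 − α`: for every nonzero
`w₂` the zero matrix is a local minimum of
`W₁ ↦ ‖Y − (μ_{W₁,w₂}(xᵢ))ᵢ‖₂ + λ_QUT‖W₁‖₁`, and consequently the penalized
problem admits a local minimum whose fitted function is constant (equal to `Ȳ`). -/
theorem qut_recovers_constant_two_layer
    (n p₁ p₂ : ℕ) (hn : 2 ≤ n) (hp₁ : 0 < p₁)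
    (α : ℝ) (hα : α ∈ Set.Ioo (0 : ℝ) 1)
    (σ : ℝ → ℝ) (s : ℝ) (hσ : HasDerivAt σ s 0) (hσ0 : σ 0 = 0) (hs : 0 < s)
    (x : Fin n → Fin p₁ → ℝ) (hx : x ≠ 0)
    (b ξ : ℝ) (hξ : 0 < ξ)
    (P : Measure (Fin n → ℝ))
    (hP : P = Measure.pi fun _ : Fin n => gaussianReal b ⟨ξ ^ 2, sq_nonneg ξ⟩)
    (lamQUT : ℝ)
    (hq : lamQUT = sInf {t : ℝ | 1 - α ≤ (P {y | lamStat n p₁ s x y ≤ t}).toReal})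
    (hcont : P {y | lamStat n p₁ s x y = lamQUT} = 0) :
    1 - α ≤ (P {y | ∀ w₂ : Fin p₂ → ℝ, w₂ ≠ 0 →
        IsLocalMin (penObj n p₁ p₂ σ x y w₂ lamQUT) 0 ∧
        ∃ W₁ : Fin p₂ → Fin p₁ → ℝ,
          IsLocalMin (penObj n p₁ p₂ σ x y w₂ lamQUT) W₁ ∧
          ∀ x' : Fin p₁ → ℝ,
            netPred n p₁ p₂ σ y w₂ W₁ x' = sampleMean n y}).toReal :=
  qut_recovers_constant_two_layer_general n p₁ p₂ α hα σ s hσ hσ0 hs x b ξ P hP lamQUT hq hcont
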